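/- Let d ≥ 1, r > d - 1, and suppose (a_k), (b_k) are sequences on ℤ^d \ {0} with |a_k| ≤ C e^{-γ|k|}/|k|^r and |b_k| ≤ C e^{-γ|k|}/|k|^r for some γ ≥ 0. Then there is a constant c depending only on r and d such that for every nonzero k ∈ ℤ^d, Σ_{l₁+l₂=k} |a_{l₁}| |b_{l₂}| |k|/|l₂| ≤ c · (2^r |k| + 2^{r+1}(6|k|+1)^{d/2} + (1/2)|k|^{d-1-r}) · C² e^{-γ|k|} / |k|^r. -/

import Mathlib

/-!
Since `|k| ≤ |l| + |k - l|`, the exponential weights of the two factors multiply to at most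
`e^{-γ|k|}`, and the larger of `|l|`, `|k - l|` is at least `|k|/2`. Hence each term is at most
`2^r |k|^{1-r} C² e^{-γ|k|} min(|l|, |k - l|)^{-(r+1)}`, and bounding the minimum's power by
`|l|^{-(r+1)} + |k - l|^{-(r+1)}` dominates the whole sum by `2 ∑_{l ∈ ℤ^d} |l|^{-(r+1)}`,
a convergent lattice `p`-series because `r + 1 > d`.
-/

noncomputable def znorm {d : ℕ} (l : Fin d → ℤ) : ℝ := Real.sqrt (∑ i, ((l i : ℝ))^2)

open Module Real

abbrev intLattice (d : ℕ) : Submodule ℤ (EuclideanSpace ℝ (Fin d)) :=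
  Submodule.span ℤ (Set.range (EuclideanSpace.basisFun (Fin d) ℝ).toBasis)

noncomputable abbrev intLatticeBasis (d : ℕ) : Basis (Fin d) ℤ (intLattice d) :=
  (EuclideanSpace.basisFun (Fin d) ℝ).toBasis.restrictScalars ℤ

noncomputable def intToEuclidean (d : ℕ) :
    (Fin d → ℤ) →ₗ[ℤ] EuclideanSpace ℝ (Fin d) :=
  (intLattice d).subtype ∘ₗ (intLatticeBasis d).equivFun.symm.toLinearMap

lemma intToEuclidean_apply {d : ℕ} (l : Fin d → ℤ) :
    intToEuclidean d l = WithLp.toLp 2 fun i => (l i : ℝ) := by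
  rw [intToEuclidean, LinearMap.comp_apply, LinearEquiv.coe_coe, Basis.equivFun_symm_apply,
    Submodule.subtype_apply, Submodule.coe_sum]
  ext i
  simp only [Submodule.coe_smul, Basis.restrictScalars_apply]
  simp [Pi.single_apply, zsmul_eq_mul]

lemma intToEuclidean_injective (d : ℕ) : Function.Injective (intToEuclidean d) :=
  Subtype.val_injective.comp (LinearEquiv.injective _)

lemma znorm_eq_norm {d : ℕ} (l : Fin d → ℤ) : znorm l = ‖intToEuclidean d l‖ := by
  simp [intToEuclidean_apply, EuclideanSpace.norm_eq, znorm]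

lemma znorm_nonneg {d : ℕ} (l : Fin d → ℤ) : 0 ≤ znorm l :=
  Real.sqrt_nonneg _

lemma znorm_pos {d : ℕ} {l : Fin d → ℤ} (hl : l ≠ 0) : 0 < znorm l := by
  rw [znorm_eq_norm, norm_pos_iff]
  exact (map_ne_zero_iff _ (intToEuclidean_injective d)).mpr hl

lemma znorm_le_znorm_sub_add {d : ℕ} (k l : Fin d → ℤ) :
    znorm k ≤ znorm (k - l) + znorm l := by
  simpa only [znorm_eq_norm, map_sub] using norm_le_norm_sub_add (intToEuclidean d k) _

lemma summable_znorm_rpow {d : ℕ} {s : ℝ} (hs : s < -d) :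
    Summable fun l : Fin d → ℤ => znorm l ^ s := by
  have hrank : finrank ℤ (intLattice d) = d := by
    rw [finrank_eq_card_basis (intLatticeBasis d), Fintype.card_fin]
  have := ZLattice.summable_norm_rpow (intLattice d) s (by rwa [hrank])
  rw [← (intLatticeBasis d).equivFun.symm.toEquiv.summable_iff] at this
  exact this.congr fun l => by rw [znorm_eq_norm]; rfl

lemma rpow_div_rpow_mul_le_two_rpow_div_min {x y K r : ℝ} (hx : 0 < x) (hy : 0 < y) (hK : 0 < K)
    (hr : 0 ≤ r) (hKxy : K ≤ x + y) :
    K ^ r / ((x * y) ^ r * x) ≤ 2 ^ r / min x y ^ (r + 1) := by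
  have hm : 0 < min x y := lt_min hx hy
  have hM : 0 < max x y := lt_max_of_lt_left hx
  calc K ^ r / ((x * y) ^ r * x) ≤ (2 * max x y) ^ r / ((min x y * max x y) ^ r * min x y) := by
        rw [min_mul_max]
        gcongr
        · linarith [le_max_left x y, le_max_right x y]
        · exact min_le_left x y
    _ = 2 ^ r / min x y ^ (r + 1) := by
        rw [mul_rpow zero_le_two hM.le, mul_rpow hm.le hM.le, rpow_add_one hm.ne']
        field_simp

lemma min_rpow_neg_le_add {x y p : ℝ} (hx : 0 ≤ x) (hy : 0 ≤ y) :
    min x y ^ (-p) ≤ x ^ (-p) + y ^ (-p) := by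
  rcases min_choice x y with h | h <;> rw [h]
  · linarith [rpow_nonneg hy (-p)]
  · linarith [rpow_nonneg hx (-p)]

lemma abs_mul_abs_mul_div_le {x y K r γ C α β : ℝ} (hx : 0 < x) (hy : 0 < y) (hK : 0 < K)
    (hr : 0 ≤ r) (hγ : 0 ≤ γ) (hKxy : K ≤ x + y)
    (hα : |α| ≤ C * exp (-γ * y) / y ^ r) (hβ : |β| ≤ C * exp (-γ * x) / x ^ r) :
    |α| * |β| * (K / x) ≤
      C ^ 2 * exp (-γ * K) / K ^ r * K * 2 ^ r * (x ^ (-(r + 1)) + y ^ (-(r + 1))) := by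
  have hweight : exp (-γ * y) * exp (-γ * x) ≤ exp (-γ * K) := by
    rw [← exp_add, exp_le_exp]
    nlinarith
  calc |α| * |β| * (K / x)
      ≤ C * exp (-γ * y) / y ^ r * (C * exp (-γ * x) / x ^ r) * (K / x) := by
        gcongr
        exact (abs_nonneg α).trans hα
    _ = C ^ 2 * (exp (-γ * y) * exp (-γ * x)) / K ^ r * K * (K ^ r / ((x * y) ^ r * x)) := by
        rw [mul_rpow hx.le hy.le]
        field_simp
    _ ≤ C ^ 2 * exp (-γ * K) / K ^ r * K * (2 ^ r * (x ^ (-(r + 1)) + y ^ (-(r + 1)))) := by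
        gcongr
        calc K ^ r / ((x * y) ^ r * x) ≤ 2 ^ r / min x y ^ (r + 1) :=
              rpow_div_rpow_mul_le_two_rpow_div_min hx hy hK hr hKxy
          _ ≤ 2 ^ r * (x ^ (-(r + 1)) + y ^ (-(r + 1))) := by
              rw [div_eq_mul_inv, ← rpow_neg (lt_min hx hy).le]
              gcongr
              exact min_rpow_neg_le_add hx.le hy.le
    _ = C ^ 2 * exp (-γ * K) / K ^ r * K * 2 ^ r * (x ^ (-(r + 1)) + y ^ (-(r + 1))) := by ring

lemma tsum_subtype_le_of_le_add_comp_sub {G : Type*} [AddCommGroup G] {f : G → ℝ}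
    (hf : Summable f) (hf0 : 0 ≤ f) {k : G} {p : G → Prop} {F : {l // p l} → ℝ} {M : ℝ}
    (hM : 0 ≤ M) (hF0 : 0 ≤ F) (hF : ∀ l, F l ≤ M * (f l + f (k - l))) :
    ∑' l, F l ≤ M * (2 * ∑' l, f l) := by
  have hinj : Function.Injective fun l : {l // p l} => k - (l : G) :=
    fun _ _ h => Subtype.val_injective (sub_right_injective h)
  have hf₁ : Summable fun l : {l // p l} => f l := hf.comp_injective Subtype.val_injective
  have hf₂ : Summable fun l : {l // p l} => f (k - l) := hf.comp_injective hinj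
  have hG : Summable fun l : {l // p l} => M * (f l + f (k - l)) := (hf₁.add hf₂).mul_left M
  calc ∑' l, F l ≤ ∑' l : {l // p l}, M * (f l + f (k - l)) :=
        (hG.of_nonneg_of_le hF0 hF).tsum_le_tsum hF hG
    _ = M * (∑' l : {l // p l}, f l + ∑' l : {l // p l}, f (k - l)) := by
        rw [tsum_mul_left, hf₁.tsum_add hf₂]
    _ ≤ M * (2 * ∑' l, f l) := by
        rw [two_mul]
        gcongr
        · exact tsum_comp_le_tsum_of_inj hf hf0 Subtype.val_injective
        · exact tsum_comp_le_tsum_of_inj hf hf0 hinj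

theorem weighted_convolution_lemma (d : ℕ) (hd : 1 ≤ d) (r : ℝ) (hr : r > (d : ℝ) - 1) :
    ∃ c : ℝ, ∀ (C γ : ℝ), 0 ≤ γ → ∀ (a b : (Fin d → ℤ) → ℝ),
      (∀ k : Fin d → ℤ, k ≠ 0 → |a k| ≤ C * Real.exp (-γ * znorm k) / znorm k ^ r) →
      (∀ k : Fin d → ℤ, k ≠ 0 → |b k| ≤ C * Real.exp (-γ * znorm k) / znorm k ^ r) →
      ∀ k : Fin d → ℤ, k ≠ 0 →
        ∑' l : {l : Fin d → ℤ // l ≠ 0 ∧ k - l ≠ 0},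
            |a (k - l.1)| * |b l.1| * (znorm k / znorm l.1)
          ≤ c * ((2 : ℝ) ^ r * znorm k + (2 : ℝ) ^ (r + 1) * (6 * znorm k + 1) ^ ((d : ℝ) / 2)
              + (1 / 2) * znorm k ^ ((d : ℝ) - 1 - r)) * (C ^ 2 * Real.exp (-γ * znorm k) / znorm k ^ r) := by
  have hr0 : 0 ≤ r := by linarith [show (1 : ℝ) ≤ d by exact_mod_cast hd]
  set f : (Fin d → ℤ) → ℝ := fun l => znorm l ^ (-(r + 1))
  have hf : Summable f := summable_znorm_rpow (by linarith)
  have hf0 : 0 ≤ f := fun l => rpow_nonneg (znorm_nonneg l) _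
  refine ⟨2 * ∑' l, f l, fun C γ hγ a b ha hb k hk => ?_⟩
  set K := znorm k
  have hK : 0 < K := znorm_pos hk
  have hterm (l : {l : Fin d → ℤ // l ≠ 0 ∧ k - l ≠ 0}) :
      |a (k - l.1)| * |b l.1| * (K / znorm l.1)
        ≤ C ^ 2 * exp (-γ * K) / K ^ r * K * 2 ^ r * (f l + f (k - l)) :=
    abs_mul_abs_mul_div_le (znorm_pos l.2.1) (znorm_pos l.2.2) hK hr0 hγ
      ((znorm_le_znorm_sub_add k l).trans_eq (add_comm _ _)) (ha _ l.2.2) (hb _ l.2.1)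
  have hparen : (2 : ℝ) ^ r * K ≤ 2 ^ r * K + 2 ^ (r + 1) * (6 * K + 1) ^ ((d : ℝ) / 2)
      + 1 / 2 * K ^ ((d : ℝ) - 1 - r) := by
    have := rpow_nonneg hK.le ((d : ℝ) - 1 - r)
    have : 0 ≤ (2 : ℝ) ^ (r + 1) * (6 * K + 1) ^ ((d : ℝ) / 2) := by positivity
    linarith
  calc _ ≤ C ^ 2 * exp (-γ * K) / K ^ r * K * 2 ^ r * (2 * ∑' l, f l) :=
        tsum_subtype_le_of_le_add_comp_sub hf hf0 (by positivity)
          (fun l => by have := znorm_nonneg l.1; positivity) hterm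
    _ = 2 * (∑' l, f l) * (2 ^ r * K) * (C ^ 2 * exp (-γ * K) / K ^ r) := by ring
    _ ≤ _ := by
        have : 0 ≤ 2 * ∑' l, f l := mul_nonneg zero_le_two (tsum_nonneg hf0)
        gcongr
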